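/- Suppose the support of Π is contained in [−κ, κ] for some κ < ∞. Let φ : ℝ → ℝ be convex and differentiable with φ(0) = 0 and |φ'(y)| ≤ κ for all y. Then φ ∈ D(T), the function Tφ is well-defined, convex and differentiable, and it satisfies Tφ(0) = 0 and |(Tφ)'(y)| ≤ κ for all y ∈ ℝ. -/

import Mathlib

open MeasureTheory Real Set Filter

noncomputable section

/-- Density of the centered normal distribution with variance `σ²`. -/
def pdens (σ y : ℝ) : ℝ :=
  (Real.sqrt (2 * Real.pi * σ ^ 2))⁻¹ * Real.exp (-(y ^ 2) / (2 * σ ^ 2))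

/-- The operator `T₁`: `T₁φ(v) = ∫ exp((yv − φ(y))/ĉ) p_σ(y) dy` with `ĉ = cσ²`. -/
def T1 (c σ : ℝ) (φ : ℝ → ℝ) (v : ℝ) : ℝ :=
  ∫ y : ℝ, Real.exp ((y * v - φ y) / (c * σ ^ 2)) * pdens σ y

/-- The operator `T₂`: `T₂Ψ(y) = ∫ exp((yv − Ψ(v))/ĉ) Pr(dv)`. -/
def T2 (c σ : ℝ) (Pr : Measure ℝ) (Ψ : ℝ → ℝ) (y : ℝ) : ℝ :=
  ∫ v : ℝ, Real.exp ((y * v - Ψ v) / (c * σ ^ 2)) ∂Pr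

/-- `Ψ = ĉ · log T₁φ`. -/
def Ψof (c σ : ℝ) (φ : ℝ → ℝ) (v : ℝ) : ℝ := c * σ ^ 2 * Real.log (T1 c σ φ v)

/-- Topological support of a measure on `ℝ`. -/
def msupport (Pr : Measure ℝ) : Set ℝ := {v | ∀ U : Set ℝ, IsOpen U → v ∈ U → 0 < Pr U}

/-- The unnormalised operator `T₀φ = ĉ · log T₂(ĉ log T₁ φ)`. -/
def T0op (c σ : ℝ) (Pr : Measure ℝ) (φ : ℝ → ℝ) (y : ℝ) : ℝ :=
  c * σ ^ 2 * Real.log (T2 c σ Pr (Ψof c σ φ) y)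

/-- The normalised operator `Tφ = ĉ · log ( T₂(ĉ log T₁ φ) / T₂(ĉ log T₁ φ)(0) )`. -/
def Tnorm (c σ : ℝ) (Pr : Measure ℝ) (φ : ℝ → ℝ) (y : ℝ) : ℝ :=
  c * σ ^ 2 * Real.log (T2 c σ Pr (Ψof c σ φ) y / T2 c σ Pr (Ψof c σ φ) 0)

/-- Membership in the domain `D(T)`: `T₁φ ∈ (0,∞)` on the support of `Pr` (finiteness being
integrability of the positive integrand) and `T₂(ĉ log T₁φ) ∈ (0,∞)` everywhere. -/
def memD (c σ : ℝ) (Pr : Measure ℝ) (φ : ℝ → ℝ) : Prop :=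
  (∀ v ∈ msupport Pr,
    Integrable (fun y : ℝ => Real.exp ((y * v - φ y) / (c * σ ^ 2)) * pdens σ y) ∧
      0 < T1 c σ φ v) ∧
  (∀ y : ℝ,
    Integrable (fun v : ℝ => Real.exp ((y * v - Ψof c σ φ v) / (c * σ ^ 2))) Pr ∧
      0 < T2 c σ Pr (Ψof c σ φ) y)

/-!
Since `|φ'| ≤ κ`, `φ` grows at most linearly, so the Gaussian factor makes `T₁φ(v)` a finite
positive integral depending continuously on `v` (dominated convergence). Hence `Ψ = ĉ log T₁φ` is
continuous, in particular bounded on `[-κ, κ]`, which carries `Π`; so `T₂Ψ` is the Laplace transform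
of a finite measure on `[-κ, κ]`. It is positive, differentiable under the integral sign, and
log-convex by Hölder's inequality, and `ĉ (log T₂Ψ)'(y)` is the mean of `v` under the tilted measure
`exp ((yv − Ψ(v))/ĉ) Π(dv) / T₂Ψ(y)`, hence lies in `[-κ, κ]`.
-/

lemma msupport_eq_support (μ : Measure ℝ) : msupport μ = μ.support := by
  rw [Measure.support_eq_forall_isOpen]
  ext v
  exact forall_congr' fun U => forall_comm

lemma ae_mem_of_msupport_subset {μ : Measure ℝ} {s : Set ℝ} (h : msupport μ ⊆ s) :
    ∀ᵐ v ∂μ, v ∈ s :=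
  mem_of_superset Measure.support_mem_ae (msupport_eq_support μ ▸ h)

lemma integral_rpow_mul_rpow_le {α : Type*} [MeasurableSpace α] {μ : Measure α}
    {f g : α → ℝ} (hf : Integrable f μ) (hg : Integrable g μ)
    (hf0 : 0 ≤ᵐ[μ] f) (hg0 : 0 ≤ᵐ[μ] g) {p q : ℝ} (hp : 0 ≤ p) (hq : 0 ≤ q)
    (hpq : p + q = 1) :
    ∫ x, f x ^ p * g x ^ q ∂μ ≤ (∫ x, f x ∂μ) ^ p * (∫ x, g x ∂μ) ^ q := by
  have hfg0 : 0 ≤ᵐ[μ] fun x => f x ^ p * g x ^ q := by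
    filter_upwards [hf0, hg0] with x hfx hgx
    exact mul_nonneg (rpow_nonneg hfx p) (rpow_nonneg hgx q)
  rw [integral_eq_lintegral_of_nonneg_ae hfg0
      ((hf.1.aemeasurable.pow_const p).mul (hg.1.aemeasurable.pow_const q)).aestronglyMeasurable,
    integral_eq_lintegral_of_nonneg_ae hf0 hf.1, integral_eq_lintegral_of_nonneg_ae hg0 hg.1,
    ENNReal.toReal_rpow, ENNReal.toReal_rpow, ← ENNReal.toReal_mul]
  refine ENNReal.toReal_mono (ENNReal.mul_ne_top
    (ENNReal.rpow_ne_top_of_nonneg hp hf.lintegral_lt_top.ne)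
    (ENNReal.rpow_ne_top_of_nonneg hq hg.lintegral_lt_top.ne)) ?_
  calc ∫⁻ x, ENNReal.ofReal (f x ^ p * g x ^ q) ∂μ
      = ∫⁻ x, ENNReal.ofReal (f x) ^ p * ENNReal.ofReal (g x) ^ q ∂μ := by
        refine lintegral_congr_ae ?_
        filter_upwards [hf0, hg0] with x hfx hgx
        rw [ENNReal.ofReal_mul (rpow_nonneg hfx p), ENNReal.ofReal_rpow_of_nonneg hfx hp,
          ENNReal.ofReal_rpow_of_nonneg hgx hq]
    _ ≤ _ := ENNReal.lintegral_mul_norm_pow_le hf.1.aemeasurable.ennreal_ofReal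
        hg.1.aemeasurable.ennreal_ofReal hp hq hpq

lemma integrable_exp_mul_abs_sub_mul_sq {a : ℝ} (ha : 0 < a) (b : ℝ) :
    Integrable fun y : ℝ => exp (b * |y| - a * y ^ 2) := by
  have hquad : ∀ b' : ℝ, Integrable fun y : ℝ => exp (b' * y - a * y ^ 2) := fun b' => by
    have hsq : ∀ y : ℝ, b' * y - a * y ^ 2 = b' ^ 2 / (4 * a) + -(a * (y - b' / (2 * a)) ^ 2) :=
      fun y => by field_simp; ring
    simp_rw [hsq, exp_add, ← neg_mul]
    exact ((integrable_exp_neg_mul_sq ha).comp_sub_right _).const_mul _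
  refine ((hquad b).add (hquad (-b))).mono' (by fun_prop) (ae_of_all _ fun y => ?_)
  rw [norm_of_nonneg (exp_pos _).le]
  rcases le_total 0 y with hy | hy
  · rw [abs_of_nonneg hy]
    exact le_add_of_nonneg_right (exp_pos _).le
  · rw [abs_of_nonpos hy, mul_neg, ← neg_mul]
    exact le_add_of_nonneg_left (exp_pos _).le

lemma pdens_pos {σ : ℝ} (hσ : σ ≠ 0) (y : ℝ) : 0 < pdens σ y := by
  unfold pdens
  positivity

lemma continuous_pdens (σ : ℝ) : Continuous (pdens σ) := by
  unfold pdens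
  fun_prop

lemma sub_mul_abs_le_of_abs_deriv_le {f : ℝ → ℝ} {κ : ℝ} (hf : Differentiable ℝ f)
    (hf' : ∀ y, |deriv f y| ≤ κ) (y : ℝ) : f 0 - κ * |y| ≤ f y := by
  have h := convex_univ.norm_image_sub_le_of_norm_deriv_le (fun x _ => hf x)
    (fun x _ => hf' x) (mem_univ 0) (mem_univ y)
  rw [sub_zero, Real.norm_eq_abs, Real.norm_eq_abs] at h
  linarith [neg_abs_le (f y - f 0)]

section T1

variable {c σ : ℝ} {φ : ℝ → ℝ}

lemma T1_integrand_le (hĉ : 0 < c * σ ^ 2) {A B R v : ℝ} (hφ : ∀ y, A - B * |y| ≤ φ y)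
    (hv : |v| ≤ R) (y : ℝ) :
    ‖exp ((y * v - φ y) / (c * σ ^ 2)) * pdens σ y‖ ≤
      (√(2 * π * σ ^ 2))⁻¹ * exp (-A / (c * σ ^ 2)) *
        exp ((R + B) / (c * σ ^ 2) * |y| - (2 * σ ^ 2)⁻¹ * y ^ 2) := by
  have hσ : σ ≠ 0 := by rintro rfl; simp at hĉ
  rw [norm_of_nonneg (mul_pos (exp_pos _) (pdens_pos hσ y)).le, pdens, mul_left_comm,
    ← exp_add, mul_assoc (√(2 * π * σ ^ 2))⁻¹, ← exp_add]
  refine mul_le_mul_of_nonneg_left (exp_le_exp.2 ?_) (by positivity)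
  have hyv : y * v ≤ |y| * R := (le_abs_self _).trans
    (abs_mul y v ▸ mul_le_mul_of_nonneg_left hv (abs_nonneg y))
  have hnum : (y * v - φ y) / (c * σ ^ 2) ≤ (-A + (R + B) * |y|) / (c * σ ^ 2) := by
    gcongr
    linarith [hφ y]
  rw [add_div, mul_div_right_comm] at hnum
  have hsq : -y ^ 2 / (2 * σ ^ 2) = -((2 * σ ^ 2)⁻¹ * y ^ 2) := by ring
  linarith

lemma integrable_T1_integrand (hĉ : 0 < c * σ ^ 2) (hφc : Continuous φ) {A B : ℝ}
    (hφ : ∀ y, A - B * |y| ≤ φ y) (v : ℝ) :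
    Integrable fun y => exp ((y * v - φ y) / (c * σ ^ 2)) * pdens σ y := by
  have hσ : σ ≠ 0 := by rintro rfl; simp at hĉ
  refine Integrable.mono'
    ((integrable_exp_mul_abs_sub_mul_sq (a := (2 * σ ^ 2)⁻¹) (by positivity) _).const_mul _)
    ((by fun_prop : Continuous fun y => exp ((y * v - φ y) / (c * σ ^ 2))).mul
      (continuous_pdens σ)).aestronglyMeasurable
    (ae_of_all _ (T1_integrand_le hĉ hφ le_rfl))

lemma T1_pos (hĉ : 0 < c * σ ^ 2) (hφc : Continuous φ) {A B : ℝ}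
    (hφ : ∀ y, A - B * |y| ≤ φ y) (v : ℝ) : 0 < T1 c σ φ v := by
  have hσ : σ ≠ 0 := by rintro rfl; simp at hĉ
  have hpos : ∀ y, 0 < exp ((y * v - φ y) / (c * σ ^ 2)) * pdens σ y :=
    fun y => mul_pos (exp_pos _) (pdens_pos hσ y)
  rw [T1, integral_pos_iff_support_of_nonneg (fun y => (hpos y).le)
    (integrable_T1_integrand hĉ hφc hφ v), Function.support_eq_univ fun y => (hpos y).ne']
  simp

lemma continuous_T1 (hĉ : 0 < c * σ ^ 2) (hφc : Continuous φ) {A B : ℝ}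
    (hφ : ∀ y, A - B * |y| ≤ φ y) : Continuous (T1 c σ φ) := by
  have hσ : σ ≠ 0 := by rintro rfl; simp at hĉ
  refine continuous_iff_continuousAt.2 fun v₀ => continuousAt_of_dominated
    (Eventually.of_forall fun v => (integrable_T1_integrand hĉ hφc hφ v).1)
    ?_ ((integrable_exp_mul_abs_sub_mul_sq (a := (2 * σ ^ 2)⁻¹) (by positivity)
      ((|v₀| + 1 + B) / (c * σ ^ 2))).const_mul
        ((√(2 * π * σ ^ 2))⁻¹ * exp (-A / (c * σ ^ 2))))
    (ae_of_all _ fun y => by fun_prop)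
  filter_upwards [Metric.ball_mem_nhds v₀ one_pos] with v hv
  refine ae_of_all _ (T1_integrand_le hĉ hφ ?_)
  have := abs_sub_abs_le_abs_sub v v₀
  rw [Metric.mem_ball, Real.dist_eq] at hv
  linarith

lemma continuous_Ψof (hĉ : 0 < c * σ ^ 2) (hφc : Continuous φ) {A B : ℝ}
    (hφ : ∀ y, A - B * |y| ≤ φ y) : Continuous (Ψof c σ φ) :=
  continuous_const.mul ((continuous_T1 hĉ hφc hφ).log fun v => (T1_pos hĉ hφc hφ v).ne')

end T1

section T2

variable {c σ κ : ℝ} {Pr : Measure ℝ} {Ψ : ℝ → ℝ}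

lemma exists_T2_integrand_le (hĉ : 0 < c * σ ^ 2) (hΨ : Continuous Ψ) :
    ∃ M, ∀ y R, |y| ≤ R → ∀ v ∈ Icc (-κ) κ,
      exp ((y * v - Ψ v) / (c * σ ^ 2)) ≤ exp ((R * κ + M) / (c * σ ^ 2)) := by
  obtain ⟨M, hM⟩ := isCompact_Icc.exists_bound_of_continuousOn hΨ.continuousOn
  refine ⟨M, fun y R hyR v hv => exp_le_exp.2 (div_le_div_of_nonneg_right ?_ hĉ.le)⟩
  have hyv : y * v ≤ R * κ := (le_abs_self _).trans (abs_mul y v ▸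
    mul_le_mul hyR (abs_le.2 hv) (abs_nonneg v) ((abs_nonneg y).trans hyR))
  linarith [neg_abs_le (Ψ v), Real.norm_eq_abs (Ψ v) ▸ hM v hv]

lemma T2_pos [NeZero Pr] {y : ℝ}
    (hint : Integrable (fun v => exp ((y * v - Ψ v) / (c * σ ^ 2))) Pr) :
    0 < T2 c σ Pr Ψ y := by
  rw [T2, integral_pos_iff_support_of_nonneg (fun v => (exp_pos _).le) hint,
    Function.support_eq_univ fun v => (exp_pos _).ne']
  exact Measure.measure_univ_pos.2 (NeZero.ne Pr)

lemma T2_le_rpow_mul_rpow {y₁ y₂ : ℝ}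
    (h₁ : Integrable (fun v => exp ((y₁ * v - Ψ v) / (c * σ ^ 2))) Pr)
    (h₂ : Integrable (fun v => exp ((y₂ * v - Ψ v) / (c * σ ^ 2))) Pr)
    {a b : ℝ} (ha : 0 ≤ a) (hb : 0 ≤ b) (hab : a + b = 1) :
    T2 c σ Pr Ψ (a * y₁ + b * y₂) ≤ T2 c σ Pr Ψ y₁ ^ a * T2 c σ Pr Ψ y₂ ^ b := by
  have hsplit : ∀ v, exp (((a * y₁ + b * y₂) * v - Ψ v) / (c * σ ^ 2)) =
      exp ((y₁ * v - Ψ v) / (c * σ ^ 2)) ^ a * exp ((y₂ * v - Ψ v) / (c * σ ^ 2)) ^ b := by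
    intro v
    rw [← exp_mul, ← exp_mul, ← exp_add, div_mul_eq_mul_div, div_mul_eq_mul_div,
      ← add_div]
    congr 2
    linear_combination Ψ v * hab
  simp only [T2, hsplit]
  exact integral_rpow_mul_rpow_le h₁ h₂ (ae_of_all _ fun v => (exp_pos _).le)
    (ae_of_all _ fun v => (exp_pos _).le) ha hb hab

lemma convexOn_log_T2 [NeZero Pr]
    (hint : ∀ y, Integrable (fun v => exp ((y * v - Ψ v) / (c * σ ^ 2))) Pr) :
    ConvexOn ℝ univ fun y => log (T2 c σ Pr Ψ y) := by
  refine ⟨convex_univ, fun y₁ _ y₂ _ a b ha hb hab => ?_⟩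
  have hpos : ∀ y, 0 < T2 c σ Pr Ψ y := fun y => T2_pos (hint y)
  rw [smul_eq_mul, smul_eq_mul, smul_eq_mul, smul_eq_mul, ← log_rpow (hpos y₁),
    ← log_rpow (hpos y₂), ← log_mul (rpow_pos_of_pos (hpos y₁) a).ne'
      (rpow_pos_of_pos (hpos y₂) b).ne']
  exact log_le_log (hpos _) (T2_le_rpow_mul_rpow (hint y₁) (hint y₂) ha hb hab)

variable [IsFiniteMeasure Pr]

lemma integrable_T2_integrand (hĉ : 0 < c * σ ^ 2) (hPr : ∀ᵐ v ∂Pr, v ∈ Icc (-κ) κ)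
    (hΨ : Continuous Ψ) (y : ℝ) :
    Integrable (fun v => exp ((y * v - Ψ v) / (c * σ ^ 2))) Pr := by
  obtain ⟨M, hM⟩ := exists_T2_integrand_le (κ := κ) hĉ hΨ
  refine (integrable_const (exp ((|y| * κ + M) / (c * σ ^ 2)))).mono'
    (by fun_prop : Continuous fun v => exp ((y * v - Ψ v) / (c * σ ^ 2))).aestronglyMeasurable ?_
  filter_upwards [hPr] with v hv
  rw [norm_of_nonneg (exp_pos _).le]
  exact hM y |y| le_rfl v hv

lemma hasDerivAt_T2 (hĉ : 0 < c * σ ^ 2) (hPr : ∀ᵐ v ∂Pr, v ∈ Icc (-κ) κ)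
    (hΨ : Continuous Ψ) (y₀ : ℝ) :
    HasDerivAt (T2 c σ Pr Ψ)
      (∫ v, v / (c * σ ^ 2) * exp ((y₀ * v - Ψ v) / (c * σ ^ 2)) ∂Pr) y₀ := by
  obtain ⟨M, hM⟩ := exists_T2_integrand_le (κ := κ) hĉ hΨ
  refine (hasDerivAt_integral_of_dominated_loc_of_deriv_le (μ := Pr)
    (F := fun y v => exp ((y * v - Ψ v) / (c * σ ^ 2)))
    (F' := fun y v => v / (c * σ ^ 2) * exp ((y * v - Ψ v) / (c * σ ^ 2)))
    (bound := fun _ => κ / (c * σ ^ 2) * exp (((|y₀| + 1) * κ + M) / (c * σ ^ 2)))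
    (Metric.ball_mem_nhds y₀ one_pos)
    (Eventually.of_forall fun y => (by fun_prop : Continuous fun v =>
      exp ((y * v - Ψ v) / (c * σ ^ 2))).aestronglyMeasurable)
    (integrable_T2_integrand hĉ hPr hΨ y₀) (by fun_prop : Continuous fun v =>
      v / (c * σ ^ 2) * exp ((y₀ * v - Ψ v) / (c * σ ^ 2))).aestronglyMeasurable
    ?_ (integrable_const _) (ae_of_all _ fun v y _ => ?_)).2
  · filter_upwards [hPr] with v hv y hy
    have hy' : |y| ≤ |y₀| + 1 := by
      have := abs_sub_abs_le_abs_sub y y₀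
      rw [Metric.mem_ball, Real.dist_eq] at hy
      linarith
    rw [norm_mul, norm_of_nonneg (exp_pos _).le, norm_div, Real.norm_eq_abs,
      Real.norm_of_nonneg hĉ.le]
    exact mul_le_mul (div_le_div_of_nonneg_right (abs_le.2 hv) hĉ.le) (hM y _ hy' v hv)
      (exp_pos _).le (div_nonneg ((abs_nonneg v).trans (abs_le.2 hv)) hĉ.le)
  · simpa [mul_comm] using (((hasDerivAt_mul_const v).sub_const (Ψ v)).div_const
      (c * σ ^ 2)).exp

lemma abs_integral_le_mul_T2 (hĉ : 0 < c * σ ^ 2) (hPr : ∀ᵐ v ∂Pr, v ∈ Icc (-κ) κ)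
    (hΨ : Continuous Ψ) (y : ℝ) :
    |∫ v, v / (c * σ ^ 2) * exp ((y * v - Ψ v) / (c * σ ^ 2)) ∂Pr| ≤
      κ / (c * σ ^ 2) * T2 c σ Pr Ψ y := by
  rw [T2, ← integral_const_mul, ← Real.norm_eq_abs]
  refine norm_integral_le_of_norm_le ((integrable_T2_integrand hĉ hPr hΨ y).const_mul _) ?_
  filter_upwards [hPr] with v hv
  rw [norm_mul, norm_of_nonneg (exp_pos _).le, norm_div, Real.norm_eq_abs,
    Real.norm_of_nonneg hĉ.le]
  exact mul_le_mul_of_nonneg_right (div_le_div_of_nonneg_right (abs_le.2 hv) hĉ.le)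
    (exp_pos _).le

end T2

section Tnorm

variable {c σ κ : ℝ} {Pr : Measure ℝ} {φ : ℝ → ℝ}

lemma Tnorm_zero : Tnorm c σ Pr φ 0 = 0 := by
  rcases eq_or_ne (T2 c σ Pr (Ψof c σ φ) 0) 0 with h | h <;> simp [Tnorm, h]

lemma Tnorm_eq_sub (hpos : ∀ y, 0 < T2 c σ Pr (Ψof c σ φ) y) :
    Tnorm c σ Pr φ = fun y => c * σ ^ 2 * log (T2 c σ Pr (Ψof c σ φ) y) -
      c * σ ^ 2 * log (T2 c σ Pr (Ψof c σ φ) 0) := by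
  funext y
  rw [Tnorm, log_div (hpos y).ne' (hpos 0).ne', mul_sub]

variable [IsFiniteMeasure Pr] [NeZero Pr]

lemma hasDerivAt_Tnorm (hĉ : 0 < c * σ ^ 2) (hPr : ∀ᵐ v ∂Pr, v ∈ Icc (-κ) κ)
    (hΨ : Continuous (Ψof c σ φ)) (y : ℝ) :
    HasDerivAt (Tnorm c σ Pr φ) (c * σ ^ 2 *
      ((∫ v, v / (c * σ ^ 2) * exp ((y * v - Ψof c σ φ v) / (c * σ ^ 2)) ∂Pr) /
        T2 c σ Pr (Ψof c σ φ) y)) y := by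
  have hpos y := T2_pos (integrable_T2_integrand hĉ hPr hΨ y)
  rw [Tnorm_eq_sub hpos]
  exact (((hasDerivAt_T2 hĉ hPr hΨ y).log (hpos y).ne').const_mul _).sub_const _

lemma abs_deriv_Tnorm_le (hĉ : 0 < c * σ ^ 2) (hPr : ∀ᵐ v ∂Pr, v ∈ Icc (-κ) κ)
    (hΨ : Continuous (Ψof c σ φ)) (y : ℝ) : |deriv (Tnorm c σ Pr φ) y| ≤ κ := by
  have hpos := T2_pos (integrable_T2_integrand hĉ hPr hΨ y)
  rw [(hasDerivAt_Tnorm hĉ hPr hΨ y).deriv, abs_mul, abs_div, abs_of_pos hĉ, abs_of_pos hpos]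
  set T := T2 c σ Pr (Ψof c σ φ) y
  calc _ ≤ c * σ ^ 2 * (κ / (c * σ ^ 2) * T / T) := by
        gcongr
        exact abs_integral_le_mul_T2 hĉ hPr hΨ y
    _ = κ := by rw [mul_div_cancel_right₀ _ hpos.ne', mul_div_cancel₀ _ hĉ.ne']

lemma convexOn_Tnorm (hĉ : 0 < c * σ ^ 2) (hPr : ∀ᵐ v ∂Pr, v ∈ Icc (-κ) κ)
    (hΨ : Continuous (Ψof c σ φ)) : ConvexOn ℝ univ (Tnorm c σ Pr φ) := by
  have hint := integrable_T2_integrand hĉ hPr hΨ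
  rw [Tnorm_eq_sub fun y => T2_pos (hint y)]
  simpa only [smul_eq_mul, sub_eq_add_neg, Pi.add_def] using
    ((convexOn_log_T2 hint).smul hĉ.le).add_const _

end Tnorm

theorem stmt9_general (c σ : ℝ) (hc : 0 < c) (hσ : 0 < σ)
    (Pr : Measure ℝ) [IsProbabilityMeasure Pr]
    (κ : ℝ) (hsupp : msupport Pr ⊆ Set.Icc (-κ) κ)
    (φ : ℝ → ℝ) (hdiff : Differentiable ℝ φ)
    (hφ' : ∀ y : ℝ, |deriv φ y| ≤ κ) :
    memD c σ Pr φ ∧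
    ConvexOn ℝ Set.univ (Tnorm c σ Pr φ) ∧
    Differentiable ℝ (Tnorm c σ Pr φ) ∧
    Tnorm c σ Pr φ 0 = 0 ∧
    (∀ y : ℝ, |deriv (Tnorm c σ Pr φ) y| ≤ κ) := by
  have hĉ : 0 < c * σ ^ 2 := by positivity
  have hPr := ae_mem_of_msupport_subset hsupp
  have hφ := sub_mul_abs_le_of_abs_deriv_le hdiff hφ'
  have hΨ := continuous_Ψof hĉ hdiff.continuous hφ
  have hint := integrable_T2_integrand hĉ hPr hΨ
  refine ⟨⟨fun v _ => ⟨integrable_T1_integrand hĉ hdiff.continuous hφ v,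
      T1_pos hĉ hdiff.continuous hφ v⟩, fun y => ⟨hint y, T2_pos (hint y)⟩⟩,
    convexOn_Tnorm hĉ hPr hΨ, fun y => (hasDerivAt_Tnorm hĉ hPr hΨ y).differentiableAt,
    Tnorm_zero, abs_deriv_Tnorm_le hĉ hPr hΨ⟩

/-- if the support of `Pr` lies in `[−κ, κ]` and `φ` is convex, differentiable,
vanishes at `0` and has `|φ'| ≤ κ`, then `φ ∈ D(T)` and `Tφ` is convex, differentiable,
vanishes at `0` and has `|(Tφ)'| ≤ κ`. -/
theorem stmt9 (c σ : ℝ) (hc : 0 < c) (hσ : 0 < σ)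
    (Pr : Measure ℝ) [IsProbabilityMeasure Pr]
    (κ : ℝ) (hsupp : msupport Pr ⊆ Set.Icc (-κ) κ)
    (φ : ℝ → ℝ) (hconv : ConvexOn ℝ Set.univ φ) (hdiff : Differentiable ℝ φ)
    (hφ0 : φ 0 = 0) (hφ' : ∀ y : ℝ, |deriv φ y| ≤ κ) :
    memD c σ Pr φ ∧
    ConvexOn ℝ Set.univ (Tnorm c σ Pr φ) ∧
    Differentiable ℝ (Tnorm c σ Pr φ) ∧
    Tnorm c σ Pr φ 0 = 0 ∧
    (∀ y : ℝ, |deriv (Tnorm c σ Pr φ) y| ≤ κ) :=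
  stmt9_general c σ hc hσ Pr κ hsupp φ hdiff hφ'

end
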